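/- arXiv:2412.20332 — 2 statements merged into one kernel-verified Lean document; each statement's English description precedes it below -/
import Mathlib

section
/- Let P be a polynomial over ℂ with factorization P = a·∏_{k=1}^m (x - r_k)^{μ_k} where the r_k are distinct and a ≠ 0. Then for every i ≥ 0, gcd(P^(0), P^(1), …, P^(i)) is associated to ∏_{k : μ_k > i} (x - r_k)^{μ_k - i}. -/
/-! In characteristic zero differentiation lowers the multiplicity of a root by exactly one, so
`t` is a root of `gcd(P, …, P⁽ⁱ⁾)` of multiplicity `mult_t P - i` (truncated), the same as its
multiplicity in the product on the right. Over `ℂ` both sides split, and split polynomials with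
the same roots are associated. -/

open Polynomial

namespace Polynomial

section CharZero

variable {R : Type*} [CommRing R] [IsDomain R] [CharZero R]

theorem rootMultiplicity_iterate_derivative {p : R[X]} {t : R} {j : ℕ}
    (hj : j ≤ p.rootMultiplicity t) :
    (derivative^[j] p).rootMultiplicity t = p.rootMultiplicity t - j := by
  induction j with
  | zero => simp
  | succ j ih =>
    rw [Function.iterate_succ_apply', derivative_rootMultiplicity_of_root
      (isRoot_iterate_derivative_of_lt_rootMultiplicity hj), ih (by omega)]
    omega

theorem iterate_derivative_ne_zero_of_le_rootMultiplicity {p : R[X]} (hp : p ≠ 0) {t : R} {j : ℕ}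
    (hj : j ≤ p.rootMultiplicity t) : derivative^[j] p ≠ 0 := by
  intro h
  have hzero : derivative^[p.rootMultiplicity t] p = 0 := by
    rw [← Nat.sub_add_cancel hj, Function.iterate_add_apply, h, iterate_derivative_zero]
  have := congr_arg (eval t) hzero
  rw [eval_iterate_derivative_rootMultiplicity, eval_zero, nsmul_eq_mul] at this
  exact mul_ne_zero (Nat.cast_ne_zero.mpr (Nat.factorial_ne_zero _))
    (eval_divByMonic_pow_rootMultiplicity_ne_zero t hp) this

end CharZero

theorem monic_prod_X_sub_C_pow {R ι : Type*} [CommRing R] (s : Finset ι) (r : ι → R)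
    (e : ι → ℕ) : (∏ k ∈ s, (X - C (r k)) ^ e k).Monic :=
  monic_prod_of_monic _ _ fun _ _ => (monic_X_sub_C _).pow _

theorem rootMultiplicity_prod_X_sub_C_pow {R ι : Type*} [CommRing R] [IsDomain R] [DecidableEq R]
    (s : Finset ι) (r : ι → R) (e : ι → ℕ) (t : R) :
    (∏ k ∈ s, (X - C (r k)) ^ e k).rootMultiplicity t = ∑ k ∈ s with r k = t, e k := by
  rw [← count_roots, roots_prod _ _ (monic_prod_X_sub_C_pow s r e).ne_zero, Multiset.count_bind,
    Finset.sum_filter]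
  simp [roots_pow, Multiset.count_singleton, eq_comm]

section Field

variable {K : Type*} [Field K] [DecidableEq K]

theorem finset_gcd_iterate_derivative_ne_zero {p : K[X]} (hp : p ≠ 0) (i : ℕ) :
    (Finset.range (i + 1)).gcd (fun j => derivative^[j] p) ≠ 0 :=
  ne_zero_of_dvd_ne_zero hp (Finset.gcd_dvd (b := 0) (by simp))

variable [CharZero K]

theorem rootMultiplicity_finset_gcd_iterate_derivative {p : K[X]} (hp : p ≠ 0) (i : ℕ) (t : K) :
    ((Finset.range (i + 1)).gcd (fun j => derivative^[j] p)).rootMultiplicity t =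
      p.rootMultiplicity t - i := by
  set G := (Finset.range (i + 1)).gcd (fun j => derivative^[j] p)
  apply le_antisymm
  -- capping the order at the multiplicity keeps the derivative nonzero
  · set j := min i (p.rootMultiplicity t)
    have hG : G ∣ derivative^[j] p := Finset.gcd_dvd (Finset.mem_range.mpr (by omega))
    calc G.rootMultiplicity t ≤ (derivative^[j] p).rootMultiplicity t :=
          rootMultiplicity_le_rootMultiplicity_of_dvd
            (iterate_derivative_ne_zero_of_le_rootMultiplicity hp (min_le_right _ _)) hG t
      _ = p.rootMultiplicity t - j := rootMultiplicity_iterate_derivative (min_le_right _ _)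
      _ = p.rootMultiplicity t - i := by omega
  · rw [le_rootMultiplicity_iff (finset_gcd_iterate_derivative_ne_zero hp i)]
    refine Finset.dvd_gcd fun j hj => ?_
    have hji : j < i + 1 := Finset.mem_range.mp hj
    exact (pow_dvd_pow _ (by omega)).trans
      (pow_sub_dvd_iterate_derivative_of_pow_dvd j (pow_rootMultiplicity_dvd p t))

end Field

end Polynomial

theorem stmt_1_general {m : ℕ} (a : ℂ) (ha : a ≠ 0) (r : Fin m → ℂ) (hr : Function.Injective r)
    (μ : Fin m → ℕ) (P : ℂ[X])
    (hP : P = C a * ∏ k, (X - C (r k)) ^ μ k) :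
    ∀ i : ℕ, Associated
      (Finset.gcd (Finset.range (i + 1)) (fun j => derivative^[j] P))
      (∏ k ∈ Finset.univ.filter (fun k => i < μ k), (X - C (r k)) ^ (μ k - i)) := by
  intro i
  have hP0 : P ≠ 0 := hP ▸ mul_ne_zero (C_ne_zero.mpr ha) (monic_prod_X_sub_C_pow _ r μ).ne_zero
  have hQ : ∏ k ∈ Finset.univ.filter (fun k => i < μ k), (X - C (r k)) ^ (μ k - i) =
      ∏ k, (X - C (r k)) ^ (μ k - i) :=
    Finset.prod_filter_of_ne fun k _ hk => by
      contrapose! hk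
      rw [Nat.sub_eq_zero_of_le hk, pow_zero]
  rw [hQ, IsAlgClosed.associated_iff_roots_eq_roots (finset_gcd_iterate_derivative_ne_zero hP0 i)
    (monic_prod_X_sub_C_pow _ r _).ne_zero]
  ext t
  rw [count_roots, count_roots, rootMultiplicity_finset_gcd_iterate_derivative hP0, hP,
    rootMultiplicity_mul (hP ▸ hP0), rootMultiplicity_C, zero_add,
    rootMultiplicity_prod_X_sub_C_pow, rootMultiplicity_prod_X_sub_C_pow]
  by_cases ht : ∃ k, r k = t
  · obtain ⟨k, rfl⟩ := ht
    simp [hr.eq_iff, Finset.filter_eq']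
  · push Not at ht
    simp [ht]

/-- For `P = a·∏ (x - r_k)^{μ_k}` with distinct `r_k` and `a ≠ 0`, for every `i ≥ 0`,
`gcd(P⁽⁰⁾, …, P⁽ⁱ⁾)` is associated to `∏_{k : μ_k > i} (x - r_k)^{μ_k - i}`. -/
theorem stmt_1 {m : ℕ} (a : ℂ) (ha : a ≠ 0) (r : Fin m → ℂ) (hr : Function.Injective r)
    (μ : Fin m → ℕ) (hμ : ∀ k, 1 ≤ μ k) (P : ℂ[X])
    (hP : P = C a * ∏ k, (X - C (r k)) ^ μ k) :
    ∀ i : ℕ, Associated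
      (Finset.gcd (Finset.range (i + 1)) (fun j => derivative^[j] P))
      (∏ k ∈ Finset.univ.filter (fun k => i < μ k), (X - C (r k)) ^ (μ k - i)) :=
  stmt_1_general a ha r hr μ P hP
end

section
/- Let P be a polynomial over ℂ of degree n with m distinct roots and multiplicity vector μ = (μ_1,…,μ_m), and let μ̄ be the conjugate partition of μ. For any partition λ of n, if λ > μ̄ in lexicographic order then the λ-th subresultant R_λ(P^(0),…,P^(n)) is the zero polynomial, while R_{μ̄}(P^(0),…,P^(n)) is nonzero. -/
open Polynomial Finset

/-- Determinant polynomial of a `p × q` matrix (for `p ≤ q`): the determinant of the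
`p × p` matrix over `R[X]` keeping the first `p - 1` columns and replacing the last column
by the column of "row polynomials" `∑_{j ≥ p-1} M_{r,j}·x^{q-1-j}`.  This agrees with
`∑_{i=0}^{q-p} det[M_1, …, M_{p-1}, M_{q-i}]·x^i`. -/
noncomputable def detPoly {R : Type*} [CommRing R] {p q : ℕ}
    (M : Matrix (Fin p) (Fin q) R) : Polynomial R :=
  Matrix.det (Matrix.of fun r c : Fin p =>
    if hc : (c : ℕ) < min (p - 1) q then C (M r ⟨c, (lt_min_iff.mp hc).2⟩)
    else ∑ j : Fin q, if p - 1 ≤ (j : ℕ) then C (M r j) * X ^ (q - 1 - (j : ℕ)) else 0)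

/-- The quantity `δ_0`: `max_{i, δ_i ≠ 0} (d_i + δ_i) − d_0` when this max is `≥ d_0`,
and `1` otherwise. -/
def delta0 (d0 : ℕ) {t : ℕ} (d δ : Fin t → ℕ) : ℕ :=
  if d0 ≤ (Finset.univ.filter fun i => δ i ≠ 0).sup (fun i => d i + δ i) then
    (Finset.univ.filter fun i => δ i ≠ 0).sup (fun i => d i + δ i) - d0
  else 1

/-- The `δ`-th subresultant `R_δ(F_0, F_1, …, F_t)`: the determinant polynomial of the
generalized Sylvester matrix whose rows are the coefficient vectors (in descending
powers, over `δ_0 + d_0` columns) of `x^{δ_0-1}F_0, …, x^0F_0`, then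
`x^{δ_1-1}F_1, …, x^0F_1`, …, `x^{δ_t-1}F_t, …, x^0F_t`.  Row `r` belongs to block `i`
when `∑_{i' < i} δ'_{i'} ≤ r < ∑_{i' ≤ i} δ'_{i'}` (with `δ' = (δ_0, δ_1, …, δ_t)`), and
is the coefficient row of `x^{δ'_i - 1 - (r - ∑_{i' < i} δ'_{i'})}·F_i`. -/
noncomputable def subres {R : Type*} [CommRing R] {t : ℕ}
    (F0 : Polynomial R) (F : Fin t → Polynomial R) (δ : Fin t → ℕ) : Polynomial R :=
  let d0 := F0.natDegree
  let δ0 := delta0 d0 (fun i => (F i).natDegree) δ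
  let δ' : Fin (t + 1) → ℕ := Fin.cons δ0 δ
  let F' : Fin (t + 1) → Polynomial R := Fin.cons F0 F
  detPoly (Matrix.of fun (r : Fin (∑ i, δ' i)) (c : Fin (δ0 + d0)) =>
    ∑ i : Fin (t + 1),
      if (∑ i' ∈ Finset.univ.filter (fun i' => i' < i), δ' i') ≤ (r : ℕ) ∧
          (r : ℕ) < (∑ i' ∈ Finset.univ.filter (fun i' => i' < i), δ' i') + δ' i then
        (X ^ (δ' i - 1 - ((r : ℕ) - ∑ i' ∈ Finset.univ.filter (fun i' => i' < i), δ' i')) *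
            F' i).coeff (δ0 + d0 - 1 - (c : ℕ))
      else 0)

/-!
Put `δ₀ = delta0 …` in front of `λ` and let `T = δ₀ + n`. The rows of the Sylvester matrix are the
coefficient vectors of the polynomials `X ^ j * P⁽ⁱ⁾` (`j < λᵢ`, with `λ₀ = δ₀`), all of degree
`< T`, so `R_λ ≠ 0` exactly when these polynomials are linearly independent.

If `λ` first exceeds `μ̄` at index `s`, the rows coming from `P, P', …, P⁽ˢ⁾` are multiples of
`g = ∏ₖ (X - rₖ) ^ (μₖ - s)`, so they span at most `T - deg g` dimensions. Since
`μ̄₁ + ⋯ + μ̄ₛ = ∑ₖ min(s, μₖ) = n - deg g` and `λ` agrees with `μ̄` before `s` and beats it at `s`,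
there are more of them than that.

For `λ = μ̄`, a linear relation among the rows reads `∑ Aᵢ P⁽ⁱ⁾ = 0` with `deg Aᵢ < λᵢ`. For the
largest `i` with `Aᵢ ≠ 0`, each `rₖ` with `μₖ ≥ i` divides every other term at least
`μₖ - i + 1` times but `P⁽ⁱ⁾` only `μₖ - i` times, so it is a root of `Aᵢ`. This gives
`#{k | μₖ ≥ i} ≥ λᵢ > deg Aᵢ` roots (for `i = 0` because `δ₀ ≤ m`).
-/

namespace Subresultant

noncomputable section

section Blocks

variable {t : ℕ} (δ : Fin t → ℕ)

def blockStart (k : ℕ) : ℕ :=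
  ∑ i ∈ univ.filter (fun i : Fin t => (i : ℕ) < k), δ i

def block (i : Fin t) : Finset ℕ :=
  Ico (blockStart δ i) (blockStart δ i + δ i)

lemma sum_filter_lt_eq_blockStart (i : Fin t) :
    ∑ j ∈ univ.filter (fun j => j < i), δ j = blockStart δ i := by
  simp only [blockStart, Fin.lt_def]

lemma blockStart_zero : blockStart δ 0 = 0 := by
  simp [blockStart]

lemma blockStart_succ (i : Fin t) : blockStart δ (i + 1) = blockStart δ i + δ i := by
  have : univ.filter (fun j : Fin t => (j : ℕ) < i + 1) =
      insert i (univ.filter fun j : Fin t => (j : ℕ) < i) := by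
    ext j
    simp only [mem_filter, mem_univ, true_and, mem_insert, Fin.ext_iff]
    omega
  rw [blockStart, this, sum_insert (by simp), add_comm]
  rfl

lemma blockStart_of_le {k : ℕ} (hk : t ≤ k) : blockStart δ k = ∑ i, δ i := by
  rw [blockStart, filter_true_of_mem fun i _ => i.2.trans_le hk]

lemma blockStart_mono : Monotone (blockStart δ) := fun _ _ h =>
  sum_le_sum_of_subset fun i hi => by
    simp only [mem_filter, mem_univ, true_and] at hi ⊢
    omega

lemma blockStart_le_sum (k : ℕ) : blockStart δ k ≤ ∑ i, δ i :=
  sum_le_sum_of_subset (filter_subset _ _)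

lemma blockStart_cons_succ (δ₀ k : ℕ) :
    blockStart (Fin.cons δ₀ δ : Fin (t + 1) → ℕ) (k + 1) = δ₀ + blockStart δ k := by
  simp [blockStart, sum_filter, Fin.sum_univ_succ]

lemma exists_mem_block {r : ℕ} (hr : r < ∑ i, δ i) : ∃ i, r ∈ block δ i := by
  suffices ∀ k ≤ t, r < blockStart δ k → ∃ i, r ∈ block δ i from
    this t le_rfl (by rwa [blockStart_of_le δ le_rfl])
  intro k
  induction k with
  | zero => simp [blockStart_zero]
  | succ k ih =>
    intro hk hrk
    rw [blockStart_succ δ ⟨k, hk⟩, Fin.val_mk] at hrk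
    by_cases hr' : r < blockStart δ k
    · exact ih (by omega) hr'
    · exact ⟨⟨k, hk⟩, mem_Ico.2 ⟨not_lt.1 hr', hrk⟩⟩

lemma blockStart_lt_of_lex {δ' : Fin t → ℕ} {i₀ : Fin t} (heq : ∀ j < i₀, δ j = δ' j)
    (hlt : δ i₀ < δ' i₀) : blockStart δ (i₀ + 1) < blockStart δ' (i₀ + 1) := by
  have : blockStart δ i₀ = blockStart δ' i₀ :=
    sum_congr rfl fun j hj => heq j (Fin.lt_def.2 (mem_filter.1 hj).2)
  rw [blockStart_succ, blockStart_succ]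
  omega

end Blocks

section Conjugate

variable {m : ℕ} (μ : Fin m → ℕ)

/-- `conjugate μ n j` is the paper's `μ̄_{j+1}`: entries are indexed from `0`. -/
def conjugate (n : ℕ) : Fin n → ℕ := fun j => #{k | (j : ℕ) + 1 ≤ μ k}

lemma conjugate_le (n : ℕ) (j : Fin n) : conjugate μ n j ≤ m :=
  (card_filter_le _ _).trans (card_fin m).le

lemma blockStart_conjugate {n s : ℕ} (hs : s ≤ n) :
    blockStart (conjugate μ n) s = ∑ k, min s (μ k) := by
  induction s with
  | zero => simp [blockStart_zero]
  | succ s ih =>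
    rw [blockStart_succ _ ⟨s, hs⟩, Fin.val_mk, ih (by omega)]
    simp only [conjugate, card_filter, ← sum_add_distrib]
    refine sum_congr rfl fun k _ => ?_
    split_ifs <;> omega

lemma blockStart_conjugate_add_sum_sub {n s : ℕ} (hn : ∑ k, μ k = n) (hs : s ≤ n) :
    blockStart (conjugate μ n) s + ∑ k, (μ k - s) = n := by
  rw [blockStart_conjugate μ hs, ← sum_add_distrib]
  exact (sum_congr rfl fun k _ => by omega).trans hn

lemma sum_conjugate {n : ℕ} (hn : ∑ k, μ k = n) : ∑ j, conjugate μ n j = n := by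
  have h := blockStart_conjugate_add_sum_sub μ hn le_rfl
  rw [blockStart_of_le _ le_rfl, sum_eq_zero fun k _ => Nat.sub_eq_zero_of_le
    (hn ▸ single_le_sum (fun _ _ => Nat.zero_le _) (mem_univ k))] at h
  exact h

end Conjugate

section Sylvester

variable {R : Type*} [CommRing R] {t : ℕ} (δ : Fin t → ℕ)

def rowPoly (F : Fin t → R[X]) (r : ℕ) : R[X] :=
  ∑ i, if r ∈ block δ i then X ^ (δ i - 1 - (r - blockStart δ i)) * F i else 0

def sylvester (F : Fin t → R[X]) : Matrix (Fin (∑ i, δ i)) (Fin (∑ i, δ i)) R :=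
  Matrix.of fun r c => (rowPoly δ F r).coeff (∑ i, δ i - 1 - c)

def blockPoly (v : Fin (∑ i, δ i) → R) (i : Fin t) : R[X] :=
  ∑ r : Fin (∑ i, δ i),
    if (r : ℕ) ∈ block δ i then v r • X ^ (δ i - 1 - (r - blockStart δ i)) else 0

lemma sum_smul_rowPoly (F : Fin t → R[X]) (v : Fin (∑ i, δ i) → R) :
    ∑ r, v r • rowPoly δ F r = ∑ i, blockPoly δ v i * F i := by
  simp only [rowPoly, blockPoly, smul_sum, sum_mul, smul_ite, smul_zero, ite_mul, zero_mul,
    smul_mul_assoc]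
  exact sum_comm

lemma blockPoly_mem_degreeLT (v : Fin (∑ i, δ i) → R) (i : Fin t) :
    blockPoly δ v i ∈ degreeLT R (δ i) := by
  refine sum_mem fun r _ => ?_
  split_ifs with hr
  · refine Submodule.smul_mem _ _ (mem_degreeLT.2 ?_)
    have := mem_Ico.1 hr
    exact (degree_X_pow_le _).trans_lt (by exact_mod_cast (by omega : δ i - 1 - _ < δ i))
  · exact zero_mem _

lemma coeff_blockPoly (v : Fin (∑ i, δ i) → R) {i : Fin t} {r : Fin (∑ i, δ i)}
    (hr : (r : ℕ) ∈ block δ i) :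
    (blockPoly δ v i).coeff (δ i - 1 - (r - blockStart δ i)) = v r := by
  rw [blockPoly, finsetSum_coeff, sum_eq_single r]
  · rw [if_pos hr, coeff_smul, coeff_X_pow_self, smul_eq_mul, mul_one]
  · intro r' _ hr'
    split_ifs with h
    · rw [coeff_smul, coeff_X_pow, if_neg, smul_zero]
      have := mem_Ico.1 h
      have := mem_Ico.1 hr
      exact fun heq => hr' (Fin.ext (by omega))
    · exact coeff_zero _
  · exact fun h => absurd (mem_univ r) h

lemma eq_zero_of_forall_blockPoly_eq_zero {v : Fin (∑ i, δ i) → R}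
    (h : ∀ i, blockPoly δ v i = 0) : v = 0 := by
  funext r
  obtain ⟨i, hi⟩ := exists_mem_block δ r.2
  rw [← coeff_blockPoly δ v hi, h i, coeff_zero, Pi.zero_apply]

lemma rowPoly_mem_degreeLT (F : Fin t → R[X])
    (hdeg : ∀ i, δ i ≠ 0 → (F i).natDegree + δ i ≤ ∑ j, δ j) (r : ℕ) :
    rowPoly δ F r ∈ degreeLT R (∑ i, δ i) := by
  refine sum_mem fun i _ => ?_
  split_ifs with hr
  · have := mem_Ico.1 hr
    have := hdeg i (by omega)
    refine mem_degreeLT.2 (degree_le_natDegree.trans_lt ?_)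
    have := natDegree_mul_le (p := X ^ (δ i - 1 - (r - blockStart δ i))) (q := F i)
    have := natDegree_X_pow_le (R := R) (δ i - 1 - (r - blockStart δ i))
    exact_mod_cast (by omega : _ < ∑ j, δ j)
  · exact zero_mem _

lemma dvd_rowPoly (F : Fin t → R[X]) {g : R[X]} {s : ℕ}
    (hdvd : ∀ i : Fin t, (i : ℕ) < s → g ∣ F i) {r : ℕ} (hr : r < blockStart δ s) :
    g ∣ rowPoly δ F r := by
  refine dvd_sum fun i _ => ?_
  split_ifs with hri
  · exact (hdvd i ((blockStart_mono δ).reflect_lt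
      ((mem_Ico.1 hri).1.trans_lt hr))).mul_left _
  · exact dvd_zero g

end Sylvester

section SylvesterOfSubres

variable {R : Type*} [CommRing R]

lemma add_le_delta0_add (d₀ : ℕ) {t : ℕ} (d δ : Fin t → ℕ) {i : Fin t} (hi : δ i ≠ 0) :
    d i + δ i ≤ delta0 d₀ d δ + d₀ := by
  have := le_sup (f := fun i => d i + δ i) (s := univ.filter fun i => δ i ≠ 0)
    (mem_filter.2 ⟨mem_univ i, hi⟩)
  unfold delta0
  split_ifs <;> omega

lemma delta0_le (d₀ : ℕ) {t : ℕ} (d δ : Fin t → ℕ) {c : ℕ} (hc : 1 ≤ c)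
    (h : ∀ i, δ i ≠ 0 → d i + δ i ≤ d₀ + c) : delta0 d₀ d δ ≤ c := by
  have := Finset.sup_le (f := fun i => d i + δ i) (s := univ.filter fun i => δ i ≠ 0)
    fun i hi => h i (mem_filter.1 hi).2
  unfold delta0
  split_ifs <;> omega

lemma detPoly_of_eq {p q : ℕ} (h : q = p) (M : Matrix (Fin p) (Fin q) R) :
    detPoly M = C (M.submatrix id (Fin.cast h.symm)).det := by
  subst h
  rw [detPoly, RingHom.map_det]
  congr 1
  ext r c
  simp only [RingHom.mapMatrix_apply, Matrix.map_apply, Matrix.submatrix_apply, id_eq,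
    Matrix.of_apply, Fin.cast_eq_self]
  split_ifs with hc
  · rfl
  · have hc' : (c : ℕ) = q - 1 := by have := c.2; omega
    rw [sum_eq_single c (fun j _ hj => if_neg fun hle => hj (Fin.ext (by omega)))
      (fun h => absurd (mem_univ c) h), if_pos hc'.ge, hc', Nat.sub_self, pow_zero, mul_one]

variable {t : ℕ} (G : Fin (t + 1) → R[X]) (δ : Fin t → ℕ)

def consDelta0 : Fin (t + 1) → ℕ :=
  Fin.cons (delta0 (G 0).natDegree (fun i => (Fin.tail G i).natDegree) δ) δ

lemma sum_consDelta0 (hδ : ∑ i, δ i = (G 0).natDegree) :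
    ∑ i, consDelta0 G δ i =
      delta0 (G 0).natDegree (fun i => (Fin.tail G i).natDegree) δ + (G 0).natDegree := by
  rw [consDelta0, Fin.sum_cons, hδ]

lemma natDegree_add_consDelta0_le (hδ : ∑ i, δ i = (G 0).natDegree) (i : Fin (t + 1))
    (hi : consDelta0 G δ i ≠ 0) :
    (G i).natDegree + consDelta0 G δ i ≤ ∑ j, consDelta0 G δ j := by
  rw [sum_consDelta0 G δ hδ]
  induction i using Fin.cases with
  | zero => simp only [consDelta0, Fin.cons_zero]; omega
  | succ i =>
    simp only [consDelta0, Fin.cons_succ] at hi ⊢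
    exact add_le_delta0_add (G 0).natDegree (fun i => (Fin.tail G i).natDegree) δ hi

lemma subres_eq_C_det (hδ : ∑ i, δ i = (G 0).natDegree) :
    subres (G 0) (Fin.tail G) δ = C (sylvester (consDelta0 G δ) G).det := by
  have hsq := (sum_consDelta0 G δ hδ).symm
  unfold consDelta0 at hsq
  rw [subres, detPoly_of_eq hsq, Fin.cons_self_tail]
  congr 2
  ext r c
  simp only [Matrix.submatrix_apply, Matrix.of_apply, id_eq, sylvester, rowPoly,
    finsetSum_coeff, Fin.val_cast, sum_filter_lt_eq_blockStart, block, mem_Ico,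
    consDelta0]
  refine sum_congr rfl fun i _ => ?_
  split_ifs <;> simp [hδ]

end SylvesterOfSubres

section Field

variable {K : Type*} [Field K]

lemma card_le_of_linearIndependent_of_dvd {ι : Type*} [Fintype ι] {p : ι → K[X]}
    (hp : LinearIndependent K p) {g : K[X]} (hg : g ≠ 0) {T : ℕ}
    (hdeg : ∀ i, p i ∈ degreeLT K T) (hdvd : ∀ i, g ∣ p i) :
    Fintype.card ι ≤ T - g.natDegree := by
  let W := (degreeLT K (T - g.natDegree)).map (LinearMap.mulLeft K g)
  have hW : ∀ i, p i ∈ W := by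
    intro i
    obtain ⟨q, hq⟩ := hdvd i
    refine ⟨q, mem_degreeLT.2 ?_, hq.symm⟩
    rcases eq_or_ne q 0 with rfl | hq0
    · exact degree_zero.trans_lt (WithBot.bot_lt_coe _)
    · have := mem_degreeLT.1 (hdeg i)
      rw [hq, ← natDegree_lt_iff_degree_lt (mul_ne_zero hg hq0), natDegree_mul hg hq0] at this
      rw [← natDegree_lt_iff_degree_lt hq0]
      omega
  have : Module.Finite K W := Module.Finite.map _ _
  calc Fintype.card ι = Module.finrank K (Submodule.span K (Set.range p)) :=
        (finrank_span_eq_card hp).symm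
    _ ≤ Module.finrank K W :=
        Submodule.finrank_mono (Submodule.span_le.2 (Set.range_subset_iff.2 hW))
    _ ≤ Module.finrank K (degreeLT K (T - g.natDegree)) := Submodule.finrank_map_le _ _
    _ = T - g.natDegree := by
        rw [(degreeLTEquiv K _).finrank_eq, Module.finrank_fin_fun]

lemma eq_zero_of_sum_mul_eq_zero {t m : ℕ} {r : Fin m → K} (hr : Function.Injective r)
    (μ : Fin m → ℕ) {F A : Fin t → K[X]} (hF : ∀ i, F i ≠ 0)
    (hroot : ∀ k (i : Fin t), (i : ℕ) ≤ μ k → rootMultiplicity (r k) (F i) = μ k - i)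
    (hA : ∀ i, (A i).degree < #{k | (i : ℕ) ≤ μ k}) (hsum : ∑ i, A i * F i = 0) :
    A = 0 := by
  classical
  by_contra hne
  obtain ⟨i₁, hi₁⟩ := Function.ne_iff.1 hne
  have hsupp : (univ.filter fun i => A i ≠ 0).Nonempty := ⟨i₁, by simpa using hi₁⟩
  set i₀ := (univ.filter fun i => A i ≠ 0).max' hsupp
  have hA₀ : A i₀ ≠ 0 := (mem_filter.1 (max'_mem _ hsupp)).2
  have hA_gt : ∀ i, i₀ < i → A i = 0 := fun i hi => by
    by_contra h
    exact (le_max' _ i (by simpa using h)).not_gt hi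
  have hroots : ∀ k, (i₀ : ℕ) ≤ μ k → (A i₀).IsRoot (r k) := by
    intro k hk
    have hrest : (X - C (r k)) ^ (μ k - i₀ + 1) ∣ ∑ i ∈ univ.erase i₀, A i * F i := by
      refine dvd_sum fun i hi => ?_
      rcases lt_or_gt_of_ne (ne_of_mem_erase hi) with hlt | hgt
      · have hlt : (i : ℕ) < i₀ := hlt
        refine dvd_mul_of_dvd_right ?_ _
        rw [← le_rootMultiplicity_iff (hF i), hroot k i (by omega)]
        omega
      · rw [hA_gt i hgt, zero_mul]
        exact dvd_zero _
    have hmain : (X - C (r k)) ^ (μ k - i₀ + 1) ∣ A i₀ * F i₀ := by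
      rw [← add_sum_erase _ _ (mem_univ i₀)] at hsum
      exact (dvd_add_left hrest).1 (hsum ▸ dvd_zero _)
    have hne : A i₀ * F i₀ ≠ 0 := mul_ne_zero hA₀ (hF i₀)
    rw [← le_rootMultiplicity_iff hne, rootMultiplicity_mul hne, hroot k i₀ hk] at hmain
    exact (rootMultiplicity_pos hA₀).1 (by omega)
  have hcard : #{k | (i₀ : ℕ) ≤ μ k} ≤ (A i₀).natDegree := by
    rw [← card_image_of_injective _ hr]
    refine card_le_degree_of_subset_roots fun x hx => ?_
    simp only [Finset.mem_val, mem_image] at hx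
    obtain ⟨k, hk, rfl⟩ := hx
    exact (mem_roots hA₀).2 (hroots k (mem_filter.1 hk).2)
  have := hA i₀
  rw [degree_eq_natDegree hA₀] at this
  exact_mod_cast this.not_ge (by exact_mod_cast hcard)

variable {t : ℕ} (δ : Fin t → ℕ) (F : Fin t → K[X])

lemma det_sylvester_ne_zero_iff (hdeg : ∀ r, rowPoly δ F r ∈ degreeLT K (∑ i, δ i)) :
    (sylvester δ F).det ≠ 0 ↔
      LinearIndependent K (fun r : Fin (∑ i, δ i) => rowPoly δ F r) := by
  set T := ∑ i, δ i
  let coeffVec : K[X] →ₗ[K] Fin T → K := LinearMap.pi fun c => lcoeff K (T - 1 - c)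
  have hrows : (sylvester δ F).row = coeffVec ∘ fun r : Fin T => rowPoly δ F r := rfl
  rw [← isUnit_iff_ne_zero, ← Matrix.isUnit_iff_isUnit_det,
    ← Matrix.linearIndependent_rows_iff_isUnit, hrows, coeffVec.linearIndependent_iff_of_injOn]
  have hspan : Submodule.span K (Set.range fun r : Fin T => rowPoly δ F r) ≤ degreeLT K T :=
    Submodule.span_le.2 (Set.range_subset_iff.2 fun r => hdeg r)
  intro x hx y hy hxy
  ext k
  by_cases hk : k < T
  · simpa [coeffVec, show T - 1 - (T - 1 - k) = k by omega] using
      congrFun hxy ⟨T - 1 - k, by omega⟩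
  · have hk' : (T : WithBot ℕ) ≤ k := by exact_mod_cast not_lt.1 hk
    rw [coeff_eq_zero_of_degree_lt ((mem_degreeLT.1 (hspan hx)).trans_le hk'),
      coeff_eq_zero_of_degree_lt ((mem_degreeLT.1 (hspan hy)).trans_le hk')]

lemma det_sylvester_eq_zero_of_dvd (hdeg : ∀ i, δ i ≠ 0 → (F i).natDegree + δ i ≤ ∑ j, δ j)
    {g : K[X]} (hg : g ≠ 0) {s : ℕ} (hdvd : ∀ i : Fin t, (i : ℕ) < s → g ∣ F i)
    (hcount : ∑ i, δ i - g.natDegree < blockStart δ s) : (sylvester δ F).det = 0 := by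
  by_contra hdet
  have hli := (det_sylvester_ne_zero_iff δ F (rowPoly_mem_degreeLT δ F hdeg)).1 hdet
  have hs := blockStart_le_sum δ s
  have := card_le_of_linearIndependent_of_dvd (hli.comp _ (Fin.castLE_injective hs)) hg
    (fun j => rowPoly_mem_degreeLT δ F hdeg _) (fun j => dvd_rowPoly δ F hdvd j.2)
  rw [Fintype.card_fin] at this
  omega

lemma det_sylvester_ne_zero (hdeg : ∀ i, δ i ≠ 0 → (F i).natDegree + δ i ≤ ∑ j, δ j)
    {m : ℕ} {r : Fin m → K} (hr : Function.Injective r) (μ : Fin m → ℕ) (hF : ∀ i, F i ≠ 0)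
    (hroot : ∀ k (i : Fin t), (i : ℕ) ≤ μ k → rootMultiplicity (r k) (F i) = μ k - i)
    (hδ : ∀ i, δ i ≤ #{k | (i : ℕ) ≤ μ k}) : (sylvester δ F).det ≠ 0 := by
  rw [det_sylvester_ne_zero_iff δ F (rowPoly_mem_degreeLT δ F hdeg),
    Fintype.linearIndependent_iff]
  intro v hv
  rw [sum_smul_rowPoly] at hv
  have hA := eq_zero_of_sum_mul_eq_zero hr μ hF hroot (A := blockPoly δ v)
    (fun i => (mem_degreeLT.1 (blockPoly_mem_degreeLT δ v i)).trans_le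
      (by exact_mod_cast hδ i)) hv
  exact congrFun (eq_zero_of_forall_blockPoly_eq_zero δ (congrFun hA))

end Field

section FieldSubres

variable {K : Type*} [Field K] {t : ℕ} (G : Fin (t + 1) → K[X]) (δ : Fin t → ℕ)

lemma subres_eq_zero_of_dvd (hδ : ∑ i, δ i = (G 0).natDegree) {g : K[X]} (hg : g ≠ 0)
    {s : ℕ} (hdvd : ∀ i : Fin (t + 1), (i : ℕ) ≤ s → g ∣ G i)
    (hcount : (G 0).natDegree - g.natDegree < blockStart δ s) :
    subres (G 0) (Fin.tail G) δ = 0 := by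
  rw [subres_eq_C_det G δ hδ, C_eq_zero]
  refine det_sylvester_eq_zero_of_dvd _ G (natDegree_add_consDelta0_le G δ hδ) hg (s := s + 1)
    (fun i hi => hdvd i (by omega)) ?_
  rw [sum_consDelta0 G δ hδ, consDelta0, blockStart_cons_succ]
  omega

lemma subres_ne_zero (hδ : ∑ i, δ i = (G 0).natDegree) {m : ℕ} {r : Fin m → K}
    (hr : Function.Injective r) (μ : Fin m → ℕ) (hG : ∀ i, G i ≠ 0)
    (hroot : ∀ k (i : Fin (t + 1)), (i : ℕ) ≤ μ k → rootMultiplicity (r k) (G i) = μ k - i)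
    (hδ₀ : delta0 (G 0).natDegree (fun i => (Fin.tail G i).natDegree) δ ≤ m)
    (hδle : ∀ i : Fin t, δ i ≤ #{k | (i : ℕ) + 1 ≤ μ k}) :
    subres (G 0) (Fin.tail G) δ ≠ 0 := by
  rw [subres_eq_C_det G δ hδ, Ne, C_eq_zero]
  refine det_sylvester_ne_zero _ G (natDegree_add_consDelta0_le G δ hδ) hr μ hG hroot
    fun i => ?_
  induction i using Fin.cases with
  | zero => simpa [consDelta0] using hδ₀
  | succ i => simpa [consDelta0] using hδle i

end FieldSubres

section Roots

variable {K : Type*} [Field K]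

lemma natDegree_prod_X_sub_C_pow {m : ℕ} (r : Fin m → K) (e : Fin m → ℕ) :
    (∏ k, (X - C (r k)) ^ e k).natDegree = ∑ k, e k := by
  rw [natDegree_prod _ _ fun k _ => pow_ne_zero _ (X_sub_C_ne_zero _)]
  simp

lemma prod_X_sub_C_pow_ne_zero {m : ℕ} (r : Fin m → K) (e : Fin m → ℕ) :
    ∏ k, (X - C (r k)) ^ e k ≠ 0 :=
  prod_ne_zero_iff.2 fun _ _ => pow_ne_zero _ (X_sub_C_ne_zero _)

lemma rootMultiplicity_C_mul_prod_X_sub_C_pow {m : ℕ} {a : K} (ha : a ≠ 0) {r : Fin m → K}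
    (hr : Function.Injective r) (μ : Fin m → ℕ) (k : Fin m) :
    rootMultiplicity (r k) (C a * ∏ j, (X - C (r j)) ^ μ j) = μ k := by
  classical
  rw [← count_roots, roots_C_mul _ ha,
    roots_prod _ _ (prod_X_sub_C_pow_ne_zero r μ)]
  simp only [roots_pow, roots_X_sub_C, Multiset.count_bind, Multiset.count_nsmul,
    Multiset.count_singleton, hr.eq_iff]
  change ∑ j, μ j * (if k = j then 1 else 0) = μ k
  simp

variable [CharZero K]

lemma coeff_iterate_derivative_natDegree_sub_ne_zero {p : K[X]} (hp : p ≠ 0) {i : ℕ}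
    (hi : i ≤ p.natDegree) : (derivative^[i] p).coeff (p.natDegree - i) ≠ 0 := by
  rw [coeff_iterate_derivative, Nat.sub_add_cancel hi, nsmul_eq_mul]
  exact mul_ne_zero (Nat.cast_ne_zero.2 (Nat.descFactorial_pos.2 hi).ne')
    (leadingCoeff_ne_zero.2 hp)

lemma natDegree_iterate_derivative_eq {p : K[X]} (hp : p ≠ 0) {i : ℕ} (hi : i ≤ p.natDegree) :
    (derivative^[i] p).natDegree = p.natDegree - i :=
  (natDegree_iterate_derivative p i).antisymm
    (le_natDegree_of_ne_zero (coeff_iterate_derivative_natDegree_sub_ne_zero hp hi))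

lemma iterate_derivative_ne_zero {p : K[X]} (hp : p ≠ 0) {i : ℕ} (hi : i ≤ p.natDegree) :
    derivative^[i] p ≠ 0 := fun h =>
  coeff_iterate_derivative_natDegree_sub_ne_zero hp hi (by rw [h, coeff_zero])

lemma rootMultiplicity_iterate_derivative {p : K[X]} {a : K} {i : ℕ}
    (hi : i ≤ rootMultiplicity a p) :
    rootMultiplicity a (derivative^[i] p) = rootMultiplicity a p - i := by
  induction i with
  | zero => rfl
  | succ i ih =>
    have h := ih (by omega)
    rw [Function.iterate_succ_apply',
      derivative_rootMultiplicity_of_root (rootMultiplicity_pos'.1 (by omega)).2, h]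
    omega

variable {m : ℕ} {a : K} (ha : a ≠ 0) {r : Fin m → K} (hr : Function.Injective r)
  (μ : Fin m → ℕ)
include ha hr

lemma rootMultiplicity_iterate_derivative_C_mul_prod (k : Fin m) {i : ℕ} (hi : i ≤ μ k) :
    rootMultiplicity (r k) (derivative^[i] (C a * ∏ j, (X - C (r j)) ^ μ j)) = μ k - i := by
  have h := rootMultiplicity_C_mul_prod_X_sub_C_pow ha hr μ k
  rw [rootMultiplicity_iterate_derivative (h ▸ hi), h]

lemma prod_pow_dvd_iterate_derivative {s i : ℕ} (hi : i ≤ s) :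
    ∏ k, (X - C (r k)) ^ (μ k - s) ∣ derivative^[i] (C a * ∏ j, (X - C (r j)) ^ μ j) := by
  refine prod_dvd_of_coprime (fun x _ y _ hxy => (pairwise_coprime_X_sub_C hr hxy).pow)
    fun k _ => ?_
  by_cases hk : i ≤ μ k
  · refine (pow_dvd_pow _ ?_).trans (pow_rootMultiplicity_dvd _ (r k))
    rw [rootMultiplicity_iterate_derivative_C_mul_prod ha hr μ k hk]
    omega
  · rw [Nat.sub_eq_zero_of_le (by omega), pow_zero]
    exact one_dvd _

end Roots

end

end Subresultant

open Subresultant in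
theorem stmt_13_general {n m : ℕ} (hm : 0 < m) (a : ℂ) (ha : a ≠ 0)
    (r : Fin m → ℂ) (hr : Function.Injective r) (μ : Fin m → ℕ)
    (hsum : ∑ j, μ j = n) (P : ℂ[X])
    (hP : P = C a * ∏ k, (X - C (r k)) ^ μ k)
    (bar : Fin n → ℕ)
    (hbar : ∀ i, bar i = (Finset.univ.filter fun j => (i : ℕ) + 1 ≤ μ j).card) :
    (∀ lam : Fin n → ℕ, Antitone lam → ∑ i, lam i = n →
        (∃ i : Fin n, (∀ j, j < i → lam j = bar j) ∧ bar i < lam i) →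
        subres P (fun i : Fin n => derivative^[(i : ℕ) + 1] P) lam = 0) ∧
      subres P (fun i : Fin n => derivative^[(i : ℕ) + 1] P) bar ≠ 0 := by
  obtain rfl : bar = conjugate μ n := funext hbar
  set G : Fin (n + 1) → ℂ[X] := fun i => derivative^[i] P
  have hPdeg : P.natDegree = n := by
    rw [hP, natDegree_C_mul ha, natDegree_prod_X_sub_C_pow, hsum]
  have hP0 : P ≠ 0 := hP ▸ mul_ne_zero (C_ne_zero.2 ha) (prod_X_sub_C_pow_ne_zero r μ)
  have hG : ∀ i, G i ≠ 0 := fun i => iterate_derivative_ne_zero hP0 (by rw [hPdeg]; omega)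
  have hroot : ∀ k (i : Fin (n + 1)), (i : ℕ) ≤ μ k → rootMultiplicity (r k) (G i) = μ k - i :=
    fun k i hi => by
      simpa only [G, hP] using rootMultiplicity_iterate_derivative_C_mul_prod ha hr μ k hi
  have hG0 : G 0 = P := by simp [G]
  have hsub : ∀ δ, subres P (fun i : Fin n => derivative^[(i : ℕ) + 1] P) δ =
      subres (G 0) (Fin.tail G) δ := fun δ => by rw [hG0]; rfl
  simp only [hsub]
  refine ⟨fun lam _ hlam ⟨i₀, hpre, hlt⟩ => ?_, ?_⟩
  · refine subres_eq_zero_of_dvd G lam (by rw [hlam, hG0, hPdeg])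
      (prod_X_sub_C_pow_ne_zero r _) (s := (i₀ : ℕ) + 1) (fun i hi => by
        simpa only [G, hP] using prod_pow_dvd_iterate_derivative ha hr μ hi) ?_
    have hlex := blockStart_lt_of_lex _ (fun j hj => (hpre j hj).symm) hlt
    have hconj := blockStart_conjugate_add_sum_sub μ hsum (s := (i₀ : ℕ) + 1) i₀.2
    rw [hG0, hPdeg, natDegree_prod_X_sub_C_pow]
    omega
  · refine subres_ne_zero G _ (by rw [sum_conjugate μ hsum, hG0, hPdeg]) hr μ hG hroot
      (delta0_le _ _ _ hm fun i _ => ?_) fun i => le_rfl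
    rw [hG0, hPdeg]
    change (derivative^[(i : ℕ) + 1] P).natDegree + _ ≤ n + m
    rw [natDegree_iterate_derivative_eq hP0 (by omega), hPdeg]
    have := conjugate_le μ n i
    omega

/-- For `P` over `ℂ` of degree `n` with multiplicity vector `μ` and conjugate `μ̄`:
if a partition `λ` of `n` is lexicographically greater than `μ̄`, then
`R_λ(P⁽⁰⁾, …, P⁽ⁿ⁾) = 0`, while `R_{μ̄}(P⁽⁰⁾, …, P⁽ⁿ⁾) ≠ 0`. -/
theorem stmt_13 {n m : ℕ} (hn : 1 ≤ n) (hm : 0 < m) (a : ℂ) (ha : a ≠ 0)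
    (r : Fin m → ℂ) (hr : Function.Injective r) (μ : Fin m → ℕ) (hanti : Antitone μ)
    (hpos : ∀ j, 1 ≤ μ j) (hsum : ∑ j, μ j = n) (P : ℂ[X])
    (hP : P = C a * ∏ k, (X - C (r k)) ^ μ k)
    (bar : Fin n → ℕ)
    (hbar : ∀ i, bar i = (Finset.univ.filter fun j => (i : ℕ) + 1 ≤ μ j).card) :
    (∀ lam : Fin n → ℕ, Antitone lam → ∑ i, lam i = n →
        (∃ i : Fin n, (∀ j, j < i → lam j = bar j) ∧ bar i < lam i) →
        subres P (fun i : Fin n => derivative^[(i : ℕ) + 1] P) lam = 0) ∧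
      subres P (fun i : Fin n => derivative^[(i : ℕ) + 1] P) bar ≠ 0 :=
  stmt_13_general hm a ha r hr μ hsum P hP bar hbar
end
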